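/- Let l ≥ 8 be even and let k_2,…,k_l be positive natural numbers. Then 𝔉c([1, k_2, …, k_l]) + 𝔉([k_4 − 1, k_5, …, k_{l−3}, k_{l−2} − 1]) = 𝔉([k_3 − 1, k_4, …, k_{l−2}, k_{l−1} − 1]) + 𝔉([k_4 − 1, k_5, …, k_{l−1}, k_l − 1]) + 𝔉([k_2 − 1, k_3, …, k_{l−3}, k_{l−2} − 1]), where the 𝔉 terms are open-chain run-length fixed-point counts (a first or last run of length 0 corresponds to an empty block in the run-length encoding); equivalently, 𝔉c([1, k_2, …, k_l]) equals the sum of the three 𝔉 terms on the right minus 𝔉([k_4 − 1, k_5, …, k_{l−3}, k_{l−2} − 1]). -/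

import Mathlib

/-- The open-chain AND-OR network map determined by an operator list `ops`
(`true` = AND, `false` = OR), on `ops.length + 2` nodes. -/
def chainMap (ops : List Bool) (x : Fin (ops.length + 2) → Bool) :
    Fin (ops.length + 2) → Bool := fun i =>
  if h0 : (i : ℕ) = 0 then x ⟨1, by omega⟩
  else if hn : (i : ℕ) = ops.length + 1 then x ⟨ops.length, by omega⟩
  else
    have hi : 1 ≤ (i : ℕ) ∧ (i : ℕ) ≤ ops.length := by
      have := i.isLt; omega
    if ops.get ⟨(i : ℕ) - 1, by omega⟩
    then x ⟨(i : ℕ) - 1, by omega⟩ && x ⟨(i : ℕ) + 1, by omega⟩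
    else x ⟨(i : ℕ) - 1, by omega⟩ || x ⟨(i : ℕ) + 1, by omega⟩

/-- `F ops` is the number of fixed points of the open-chain AND-OR network. -/
noncomputable def F (ops : List Bool) : ℕ :=
  Nat.card {x : Fin (ops.length + 2) → Bool // chainMap ops x = x}

/-- Run-length encoding: block `j` (1-based) consists of `k_j` copies of
`true` if `j` is odd and `false` if `j` is even. -/
def runOps : List ℕ → List Bool
  | [] => []
  | k :: t => List.replicate k true ++ (runOps t).map (fun b => !b)

/-- `Fr L` = 𝔉(L), the number of fixed points of the open-chain AND-OR
network with run-length list `L`. -/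
noncomputable def Fr (L : List ℕ) : ℕ := F (runOps L)

/-- The closed-chain AND-OR network map on `ZMod n` determined by
`ops : ZMod n → Bool` (`true` = AND, `false` = OR). -/
def cycleMap {n : ℕ} (ops : ZMod n → Bool) (x : ZMod n → Bool) :
    ZMod n → Bool := fun i =>
  if ops i then x (i - 1) && x (i + 1) else x (i - 1) || x (i + 1)

/-- `Fc ops` is the number of fixed points of the closed-chain AND-OR network. -/
noncomputable def Fc {n : ℕ} (ops : ZMod n → Bool) : ℕ :=
  Nat.card {x : ZMod n → Bool // cycleMap ops x = x}

/-- The cyclic operator assignment for run-length list `L`: going cyclically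
from index `0`, a block of `k_j` consecutive values equal to `true` if `j` is
odd and `false` if `j` is even. -/
def cOps (L : List ℕ) : ZMod L.sum → Bool :=
  fun i => (runOps L).getD i.val false

/-- `Frc L` = 𝔉c(L), the number of fixed points of the closed-chain AND-OR
network with run-length list `L`. -/
noncomputable def Frc (L : List ℕ) : ℕ := Fc (cOps L)

/-!
A fixed point of an AND-OR chain is a Boolean sequence in which every interior node equals the
gate applied to its two neighbours. Read as a walk through the pairs `(xᵢ, xᵢ₊₁)` of consecutive
values, the fixed points with prescribed first and last pair are counted by an entry of the
product of one `4 × 4` step matrix per gate. Open-chain fixed points are the walks from a state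
`(a, a)` to a state `(b, b)`, closed-chain fixed points are the closed walks, so `𝔉` is a sum of
four entries and `𝔉c` a trace. Negating all gates conjugates the transfer matrix by the
complement of states, and a run of `k` AND gates has an explicit matrix that only depends on
whether `k` is `0`, `1` or at least `2`. Hence all five terms of the recursion are polynomials
in the sixteen entries of the transfer matrix of the middle runs `[k₅, …, k_{l-3}]`, and the
recursion is an identity between these polynomials.
-/

theorem Nat.card_eq_sum_card_fiber {α ι : Type*} [Finite α] [Fintype ι] (P : α → Prop)
    (f : α → ι) : Nat.card {x // P x} = ∑ i, Nat.card {x // P x ∧ f x = i} := by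
  rw [← Nat.card_sigma]
  exact Nat.card_congr
    ⟨fun x => ⟨f x, x, x.2, rfl⟩, fun p => ⟨p.2, p.2.2.1⟩, fun _ => rfl,
      by rintro ⟨i, x, hx, rfl⟩; rfl⟩

theorem Nat.card_const_and {α : Type*} [Finite α] (p : Prop) [Decidable p] (Q : α → Prop) :
    Nat.card {x // p ∧ Q x} = (if p then 1 else 0) * Nat.card {x // Q x} := by
  by_cases hp : p <;> simp [hp]

theorem Nat.card_fin_cons_subtype {α : Type*} {m : ℕ} (a : α) (P : (Fin m → α) → Prop) :
    Nat.card {x : Fin (m + 1) → α // x 0 = a ∧ P (Fin.tail x)} = Nat.card {y // P y} :=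
  Nat.card_congr
    ⟨fun x => ⟨Fin.tail x.1, x.2.2⟩, fun y => ⟨Fin.cons a y.1, by simpa using y.2⟩,
      by rintro ⟨x, rfl, hx⟩; simp, fun y => by simp⟩

/-- A pair `(xᵢ, xᵢ₊₁)` of values at consecutive nodes. -/
abbrev State := Bool × Bool

def gate (op p r : Bool) : Bool := if op then p && r else p || r

/-- The transition from `(xᵢ₋₁, xᵢ)` to `(xᵢ, xᵢ₊₁)` respects the gate `op` at node `i`. -/
def IsStep (op : Bool) (s u : State) : Prop := u.1 = s.2 ∧ s.2 = gate op s.1 u.2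

instance (op : Bool) (s u : State) : Decidable (IsStep op s u) :=
  inferInstanceAs (Decidable (_ ∧ _))

def stepMatrix (op : Bool) : Matrix State State ℕ := fun s u => if IsStep op s u then 1 else 0

def transferMatrix (ops : List Bool) : Matrix State State ℕ := (ops.map stepMatrix).prod

theorem transferMatrix_nil : transferMatrix [] = 1 := rfl

theorem transferMatrix_cons (op : Bool) (ops : List Bool) :
    transferMatrix (op :: ops) = stepMatrix op * transferMatrix ops := by
  simp [transferMatrix]

theorem transferMatrix_append (l₁ l₂ : List Bool) :
    transferMatrix (l₁ ++ l₂) = transferMatrix l₁ * transferMatrix l₂ := by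
  simp [transferMatrix]

def State.not : State ≃ State :=
  Function.Involutive.toPerm (fun s => (!s.1, !s.2)) fun s => by simp

@[simp]
theorem State.not_apply (s : State) : State.not s = (!s.1, !s.2) := rfl

theorem stepMatrix_not (op : Bool) :
    stepMatrix (!op) = (stepMatrix op).submatrix State.not State.not := by
  ext ⟨a, b⟩ ⟨c, d⟩
  cases op <;> cases a <;> cases b <;> cases c <;> cases d <;> rfl

theorem transferMatrix_map_not (ops : List Bool) :
    transferMatrix (ops.map (!·)) = (transferMatrix ops).submatrix State.not State.not := by
  induction ops with
  | nil => exact (Matrix.submatrix_one_equiv _).symm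
  | cons op ops ih =>
    rw [List.map_cons, transferMatrix_cons, transferMatrix_cons, ih, stepMatrix_not,
      Matrix.submatrix_mul_equiv]

def andBlock (k : ℕ) : Matrix State State ℕ := fun s t =>
  match s, t with
  | (false, false), (false, false) => 1
  | (false, false), (false, true) => if 1 ≤ k then 1 else 0
  | (false, true), (false, true) => if k = 0 then 1 else 0
  | (true, false), (false, false) => if 1 ≤ k then 1 else 0
  | (true, false), (false, true) => if 2 ≤ k then 1 else 0
  | (true, false), (true, false) => if k = 0 then 1 else 0
  | (true, true), (true, true) => 1
  | _, _ => 0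

theorem transferMatrix_replicate_true (k : ℕ) :
    transferMatrix (List.replicate k true) = andBlock k := by
  rw [transferMatrix, List.map_replicate, List.prod_replicate]
  induction k with
  | zero =>
    ext ⟨a, b⟩ ⟨c, d⟩
    cases a <;> cases b <;> cases c <;> cases d <;> rfl
  | succ k ih =>
    ext ⟨a, b⟩ ⟨c, d⟩
    rw [pow_succ', ih]
    cases a <;> cases b <;> cases c <;> cases d <;>
      simp [Matrix.mul_apply, Fintype.sum_prod_type, stepMatrix, IsStep, gate, andBlock,
        Nat.one_le_iff_ne_zero, ite_not, ite_add_ite]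

def IsInteriorFixed (ops : List Bool) (x : Fin (ops.length + 2) → Bool) : Prop :=
  ∀ i : Fin ops.length, x i.castSucc.succ = gate ops[i] (x i.castSucc.castSucc) (x i.succ.succ)

def headState {m : ℕ} (x : Fin (m + 2) → Bool) : State := (x 0, x 1)

def lastState {m : ℕ} (x : Fin (m + 2) → Bool) : State :=
  (x (Fin.last m).castSucc, x (Fin.last (m + 1)))

theorem isInteriorFixed_cons_iff (op : Bool) (ops : List Bool)
    (x : Fin (ops.length + 3) → Bool) :
    IsInteriorFixed (op :: ops) x ↔ x 1 = gate op (x 0) (x 2) ∧ IsInteriorFixed ops (Fin.tail x) :=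
  Fin.forall_fin_succ

theorem card_isInteriorFixed (ops : List Bool) (s t : State) :
    Nat.card {x // IsInteriorFixed ops x ∧ headState x = s ∧ lastState x = t} =
      transferMatrix ops s t := by
  induction ops generalizing s with
  | nil =>
    rw [transferMatrix_nil, Matrix.one_apply]
    refine (Nat.card_congr ((finTwoArrowEquiv Bool).subtypeEquiv
      (q := fun p : State => p = s ∧ s = t) fun x => ?_)).trans ?_
    · exact ⟨fun ⟨_, hs, ht⟩ => ⟨hs, hs.symm.trans ht⟩,
        fun ⟨hs, ht⟩ => ⟨fun i => i.elim0, hs, hs.trans ht⟩⟩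
    · split_ifs with h <;> simp [h]
  | cons op ops ih =>
    have hsplit : ∀ x : Fin (ops.length + 3) → Bool,
        (IsInteriorFixed (op :: ops) x ∧ headState x = s ∧ lastState x = t) ↔
          x 0 = s.1 ∧ (IsStep op s (headState (Fin.tail x)) ∧ IsInteriorFixed ops (Fin.tail x) ∧
            lastState (Fin.tail x) = t) := by
      intro x
      obtain ⟨s₁, s₂⟩ := s
      have hlast : lastState (Fin.tail x) = lastState x := rfl
      simp only [isInteriorFixed_cons_iff, headState, IsStep, Prod.mk.injEq, hlast]
      constructor
      · rintro ⟨⟨h₁, hx⟩, ⟨rfl, rfl⟩, ht⟩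
        exact ⟨rfl, ⟨rfl, h₁⟩, hx, ht⟩
      · rintro ⟨rfl, ⟨h₂, h₁⟩, hx, ht⟩
        exact ⟨⟨h₂.trans h₁, hx⟩, ⟨rfl, h₂⟩, ht⟩
    calc _ = Nat.card {y // IsStep op s (headState y) ∧ IsInteriorFixed ops y ∧ lastState y = t} :=
          (Nat.card_congr (Equiv.subtypeEquivRight hsplit)).trans
            (Nat.card_fin_cons_subtype s.1 fun y : Fin (ops.length + 2) → Bool =>
              IsStep op s (headState y) ∧ IsInteriorFixed ops y ∧ lastState y = t)
      _ = ∑ u, Nat.card {y // IsStep op s u ∧ IsInteriorFixed ops y ∧ headState y = u ∧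
            lastState y = t} := by
          rw [Nat.card_eq_sum_card_fiber _ headState]
          refine Finset.sum_congr rfl fun u _ => Nat.card_congr (Equiv.subtypeEquivRight ?_)
          rintro y
          constructor
          · rintro ⟨⟨hs, hy, ht⟩, rfl⟩; exact ⟨hs, hy, rfl, ht⟩
          · rintro ⟨hs, hy, rfl, ht⟩; exact ⟨⟨hs, hy, ht⟩, rfl⟩
      _ = ∑ u, stepMatrix op s u * transferMatrix ops u t := by
          simp only [Nat.card_const_and, ih, stepMatrix]
      _ = transferMatrix (op :: ops) s t := by rw [transferMatrix_cons, Matrix.mul_apply]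

theorem chainMap_eq_self_iff (ops : List Bool) (x : Fin (ops.length + 2) → Bool) :
    chainMap ops x = x ↔
      IsInteriorFixed ops x ∧ x 1 = x 0 ∧
        x (Fin.last ops.length).castSucc = x (Fin.last (ops.length + 1)) := by
  rw [funext_iff, Fin.forall_fin_succ, Fin.forall_fin_succ']
  have h₀ : chainMap ops x 0 = x 1 := by simp [chainMap]
  have hlast : chainMap ops x (Fin.last ops.length).succ = x (Fin.last ops.length).castSucc := by
    simp only [chainMap, Fin.succ_last, Fin.val_last, ↓reduceDIte]
    rfl
  have hint : ∀ i : Fin ops.length, chainMap ops x i.castSucc.succ =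
      gate ops[i] (x i.castSucc.castSucc) (x i.succ.succ) := by
    intro i
    simp only [chainMap, Fin.val_succ, Fin.val_castSucc, Nat.add_eq_zero_iff, one_ne_zero,
      and_false, ↓reduceDIte, Nat.add_right_cancel_iff, i.isLt.ne, add_tsub_cancel_right, gate,
      List.get_eq_getElem]
    rfl
  simp only [h₀, hlast, hint, IsInteriorFixed, eq_comm (a := gate _ _ _)]
  tauto

theorem F_eq_sum (ops : List Bool) :
    F ops = ∑ a, ∑ b, transferMatrix ops (a, a) (b, b) := by
  rw [F, Nat.card_congr (Equiv.subtypeEquivRight (chainMap_eq_self_iff ops)),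
    Nat.card_eq_sum_card_fiber _ fun x => (x 0, x (Fin.last (ops.length + 1))),
    Fintype.sum_prod_type]
  refine Finset.sum_congr rfl fun a _ => Finset.sum_congr rfl fun b _ => ?_
  rw [← card_isInteriorFixed]
  refine Nat.card_congr (Equiv.subtypeEquivRight fun x => ?_)
  simp only [headState, lastState, Prod.mk.injEq]
  constructor
  · rintro ⟨⟨hx, h₁, h₂⟩, rfl, rfl⟩
    exact ⟨hx, ⟨rfl, h₁⟩, h₂, rfl⟩
  · rintro ⟨hx, ⟨rfl, h₁⟩, h₂, rfl⟩
    exact ⟨⟨hx, h₁, h₂⟩, rfl, rfl⟩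

section Cycle

variable {n : ℕ}

/-- The shift by one puts the gate of node `i` of the cycle at node `i + 1` of the chain, which is
where `IsInteriorFixed` expects `ops[i]`. -/
def unrollCycle (x : ZMod n → Bool) : Fin (n + 2) → Bool := fun k => x ((k : ℕ) - 1)

theorem headState_unrollCycle (x : ZMod n → Bool) :
    headState (unrollCycle x) = lastState (unrollCycle x) := by
  simp [headState, lastState, unrollCycle]

variable [NeZero n]

def rollCycle (y : Fin (n + 2) → Bool) : ZMod n → Bool := fun j =>
  y ⟨j.val + 1, by have := ZMod.val_lt j; omega⟩

theorem rollCycle_unrollCycle (x : ZMod n → Bool) : rollCycle (unrollCycle x) = x := by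
  funext j
  simp [rollCycle, unrollCycle]

theorem unrollCycle_rollCycle {y : Fin (n + 2) → Bool} (hy : headState y = lastState y) :
    unrollCycle (rollCycle y) = y := by
  simp only [headState, lastState, Prod.mk.injEq] at hy
  funext ⟨k, hk⟩
  simp only [unrollCycle, rollCycle]
  rcases k with _ | i
  · have : ((0 : ℕ) : ZMod n) - 1 = ((n - 1 : ℕ) : ZMod n) := by
      rw [Nat.cast_sub NeZero.one_le]; simp
    simp only [this, ZMod.val_natCast, Nat.mod_eq_of_lt (Nat.sub_lt (NeZero.pos n) one_pos),
      Nat.sub_add_cancel NeZero.one_le]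
    exact hy.1.symm
  · rcases (show i < n ∨ i = n by omega) with hi | rfl
    · simp [ZMod.val_natCast, Nat.mod_eq_of_lt hi]
    · simp only [Nat.cast_add, Nat.cast_one, add_sub_cancel_right, ZMod.natCast_self,
        ZMod.val_zero]
      exact hy.2

theorem isInteriorFixed_unrollCycle_iff {ops : List Bool} [NeZero ops.length]
    (c : ZMod ops.length → Bool) (hops : ∀ i (hi : i < ops.length), c i = ops[i])
    (x : ZMod ops.length → Bool) :
    IsInteriorFixed ops (unrollCycle x) ↔ cycleMap c x = x := by
  have hnode : ∀ i : Fin ops.length,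
      (unrollCycle x i.castSucc.succ =
          gate ops[i] (unrollCycle x i.castSucc.castSucc) (unrollCycle x i.succ.succ)) ↔
        cycleMap c x i = x i := by
    intro i
    simp only [unrollCycle, cycleMap, hops i i.isLt, gate, Fin.val_succ, Fin.val_castSucc,
      Nat.cast_add, Nat.cast_one, add_sub_cancel_right]
    exact eq_comm
  rw [funext_iff]
  refine ⟨fun h j => ?_, fun h i => (hnode i).2 (h i)⟩
  simpa using (hnode ⟨j.val, ZMod.val_lt j⟩).1 (h _)

theorem Fc_eq_trace (c : ZMod n → Bool) {ops : List Bool} (hn : ops.length = n)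
    (hops : ∀ i (hi : i < ops.length), c i = ops[i]) :
    Fc c = (transferMatrix ops).trace := by
  subst hn
  let e : {x // cycleMap c x = x} ≃ {y // IsInteriorFixed ops y ∧ headState y = lastState y} :=
    { toFun x := ⟨unrollCycle x.1,
        (isInteriorFixed_unrollCycle_iff c hops _).2 x.2, headState_unrollCycle _⟩
      invFun y := ⟨rollCycle y.1, by
        rw [← isInteriorFixed_unrollCycle_iff c hops, unrollCycle_rollCycle y.2.2]
        exact y.2.1⟩
      left_inv x := Subtype.ext (rollCycle_unrollCycle x.1)
      right_inv y := Subtype.ext (unrollCycle_rollCycle y.2.2) }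
  rw [Fc, Nat.card_congr e, Nat.card_eq_sum_card_fiber _ headState]
  refine Finset.sum_congr rfl fun s _ => ?_
  rw [Matrix.diag_apply, ← card_isInteriorFixed]
  refine Nat.card_congr (Equiv.subtypeEquivRight fun y => ?_)
  constructor
  · rintro ⟨⟨hy, h⟩, rfl⟩; exact ⟨hy, rfl, h.symm⟩
  · rintro ⟨hy, rfl, h⟩; exact ⟨⟨hy, h.symm⟩, rfl⟩

end Cycle

theorem runOps_length (L : List ℕ) : (runOps L).length = L.sum := by
  induction L with
  | nil => rfl
  | cons k L ih => simp [runOps, ih]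

theorem Frc_eq_trace (L : List ℕ) (h : L.sum ≠ 0) :
    Frc L = (transferMatrix (runOps L)).trace := by
  have : NeZero L.sum := ⟨h⟩
  refine Fc_eq_trace (cOps L) (runOps_length L) fun i hi => ?_
  simp [cOps, ZMod.val_natCast, Nat.mod_eq_of_lt (runOps_length L ▸ hi), hi]

theorem runOps_append (L₁ L₂ : List ℕ) :
    runOps (L₁ ++ L₂) =
      runOps L₁ ++ if Even L₁.length then runOps L₂ else (runOps L₂).map (!·) := by
  induction L₁ with
  | nil => simp [runOps]
  | cons k L ih =>
    by_cases h : Even L.length <;>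
      simp [runOps, ih, h, Nat.even_add_one, Function.comp_def]

theorem transferMatrix_runOps_cons (k : ℕ) (L : List ℕ) :
    transferMatrix (runOps (k :: L)) =
      andBlock k * (transferMatrix (runOps L)).submatrix State.not State.not := by
  rw [runOps, transferMatrix_append, transferMatrix_replicate_true, transferMatrix_map_not]

theorem transferMatrix_runOps_append_of_odd {L₁ : List ℕ} (h : Odd L₁.length) (L₂ : List ℕ) :
    transferMatrix (runOps (L₁ ++ L₂)) =
      transferMatrix (runOps L₁) * (transferMatrix (runOps L₂)).submatrix State.not State.not := by
  rw [runOps_append, if_neg (Nat.not_even_iff_odd.2 h), transferMatrix_append,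
    transferMatrix_map_not]

/-- The run-length list `[1, k₂, …, k_l]` is written `1 :: a :: b :: c :: M ++ [d, e, f]`,
so `M = [k₅, …, k_{l-3}]`. -/
theorem andor_closed_chain_recursion_one_general (a b c d e f : ℕ) (M : List ℕ)
    (ha : 1 ≤ a) (hb : 1 ≤ b) (hc : 1 ≤ c) (hd : 1 ≤ d) (he : 1 ≤ e)
    (hf : 1 ≤ f)
    (hModd : Odd M.length) :
    Frc (1 :: a :: b :: c :: M ++ [d, e, f]) + Fr ((c - 1) :: M ++ [d - 1]) =
      Fr ((b - 1) :: c :: M ++ [d, e - 1]) +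
      Fr ((c - 1) :: M ++ [d, e, f - 1]) +
      Fr ((a - 1) :: b :: c :: M ++ [d - 1]) := by
  rw [Frc_eq_trace _ (by simp)]
  simp only [Fr, F_eq_sum]
  -- Writing `k = k' + 1` expresses the entries of the blocks of lengths `k` and `k - 1` through
  -- the same indicators of `k'`.
  obtain ⟨a, rfl⟩ := Nat.exists_eq_add_one.2 ha
  obtain ⟨b, rfl⟩ := Nat.exists_eq_add_one.2 hb
  obtain ⟨c, rfl⟩ := Nat.exists_eq_add_one.2 hc
  obtain ⟨d, rfl⟩ := Nat.exists_eq_add_one.2 hd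
  obtain ⟨e, rfl⟩ := Nat.exists_eq_add_one.2 he
  obtain ⟨f, rfl⟩ := Nat.exists_eq_add_one.2 hf
  simp only [List.cons_append, transferMatrix_runOps_cons,
    transferMatrix_runOps_append_of_odd hModd, runOps.eq_1, transferMatrix_nil,
    Matrix.submatrix_one_equiv, mul_one, Nat.add_sub_cancel]
  simp only [Matrix.trace, Matrix.diag, Matrix.mul_apply, Matrix.submatrix_apply,
    State.not_apply, Fintype.sum_prod_type, Fintype.sum_bool, andBlock, Bool.not_true,
    Bool.not_false, le_add_iff_nonneg_left, zero_le, Nat.add_one_ne_zero, Nat.reduceLeDiff,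
    ↓reduceIte, mul_one, one_mul, mul_zero, zero_mul, add_zero, zero_add]
  ring

/-- for `l ≥ 8` even and the closed-chain run-length list
`[1, k₂, …, k_l]` (here written `1 :: a :: b :: c :: M ++ [d, e, f]`, with
`a = k₂`, `b = k₃`, `c = k₄`, `M = [k₅, …, k_{l-3}]`, `d = k_{l-2}`,
`e = k_{l-1}`, `f = k_l`),
`𝔉c([1,k₂,…,k_l]) + 𝔉(k₄-1,k₅,…,k_{l-3},k_{l-2}-1)
  = 𝔉(k₃-1,k₄,…,k_{l-2},k_{l-1}-1) + 𝔉(k₄-1,k₅,…,k_{l-1},k_l-1)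
    + 𝔉(k₂-1,k₃,…,k_{l-3},k_{l-2}-1)`. -/
theorem andor_closed_chain_recursion_one (a b c d e f : ℕ) (M : List ℕ)
    (ha : 1 ≤ a) (hb : 1 ≤ b) (hc : 1 ≤ c) (hd : 1 ≤ d) (he : 1 ≤ e)
    (hf : 1 ≤ f) (hM : ∀ k ∈ M, 1 ≤ k) (hMlen : 1 ≤ M.length)
    (hModd : Odd M.length) :
    Frc (1 :: a :: b :: c :: M ++ [d, e, f]) + Fr ((c - 1) :: M ++ [d - 1]) =
      Fr ((b - 1) :: c :: M ++ [d, e - 1]) +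
      Fr ((c - 1) :: M ++ [d, e, f - 1]) +
      Fr ((a - 1) :: b :: c :: M ++ [d - 1]) :=
  andor_closed_chain_recursion_one_general a b c d e f M ha hb hc hd he hf hModd
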